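/- arXiv:1908.11637 — 7 statements merged into one kernel-verified Lean document; each statement's English description precedes it below -/
import Mathlib

section
/- Let φ be an automorphism of finite order n of a group G such that no nontrivial element of G has order dividing n (coprimality). If for some g ∈ G the iterated commutator [g, φ, φ, ..., φ] (with φ repeated i times) is trivial for some i ≥ 1, then already [g, φ] = 1, i.e. φ(g) = g. -/
/-- The iterated commutator of an element `g` with an automorphism `φ`:
`autEngel φ g 0 = g` and `autEngel φ g (k+1) = (autEngel φ g k)⁻¹ * φ (autEngel φ g k)`,
so that `autEngel φ g k = [g, ₖφ]`. -/
def autEngel {G : Type*} [Group G] (φ : MulAut G) (g : G) : ℕ → G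
  | 0 => g
  | k + 1 => (autEngel φ g k)⁻¹ * φ (autEngel φ g k)

lemma autEngel_shift {G : Type*} [Group G] (φ : MulAut G) (g : G) (k : ℕ) :
    autEngel φ g (k + 1) = autEngel φ (g⁻¹ * φ g) k := by
  induction k with
  | zero => rfl
  | succ k ih =>
    rw [show autEngel φ g (k + 1 + 1) =
      (autEngel φ g (k + 1))⁻¹ * φ (autEngel φ g (k + 1)) from rfl, ih]
    rfl

lemma pow_apply_of_fixed {G : Type*} [Group G] (φ : MulAut G) (x : G) (hx : φ x = x) (k : ℕ) :
    (φ ^ k) x = x := by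
  induction k with
  | zero => rfl
  | succ k ih => rw [pow_succ, MulAut.mul_apply, hx, ih]

lemma key_pow {G : Type*} [Group G] (φ : MulAut G) (g : G)
    (hfix : φ (g⁻¹ * φ g) = g⁻¹ * φ g) (k : ℕ) :
    (φ ^ k) g = g * (g⁻¹ * φ g) ^ k := by
  induction k with
  | zero => simp
  | succ k ih =>
    rw [pow_succ', MulAut.mul_apply, ih, map_mul, map_pow, hfix,
      pow_succ' (g⁻¹ * φ g), ← mul_assoc, mul_inv_cancel_left]

/-- Let `φ` be an automorphism of finite order `n` of a group `G` such that no nontrivial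
element of `G` has order dividing `n`.  If `[g, ᵢφ] = 1` for some `i ≥ 1`, then `φ g = g`. -/
theorem fixed_of_iterated_commutator_trivial
    {G : Type*} [Group G] (φ : MulAut G) (n : ℕ) (hn : 0 < n) (hord : φ ^ n = 1)
    (hcop : ∀ x : G, x ≠ 1 → ¬ orderOf x ∣ n)
    (g : G) (i : ℕ) (hi : 1 ≤ i) (h : autEngel φ g i = 1) :
    φ g = g := by
  induction i generalizing g with
  | zero => omega
  | succ i ih =>
    rcases Nat.eq_zero_or_pos i with hi0 | hipos
    · subst hi0
      have : g⁻¹ * φ g = 1 := h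
      rw [← mul_left_cancel_iff (a := g⁻¹), this, inv_mul_cancel]
    · -- reduce to x := g⁻¹ * φ g, which satisfies autEngel φ x i = 1
      rw [autEngel_shift] at h
      have hfix : φ (g⁻¹ * φ g) = g⁻¹ * φ g := ih (g⁻¹ * φ g) hipos h
      set x := g⁻¹ * φ g with hx
      have hxn : x ^ n = 1 := by
        have := key_pow φ g hfix n
        rw [hord] at this
        simpa using this.symm
      have hx1 : x = 1 := by
        by_contra hne
        exact hcop x hne (orderOf_dvd_of_pow_eq_one hxn)
      rw [← mul_left_cancel_iff (a := g⁻¹), ← hx, hx1, inv_mul_cancel]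
end

section
/- Let φ be an automorphism of a finite nilpotent group G with gcd(|φ|, |G|) = 1. Then every element g ∈ G can be written uniquely as g = c·u where c is a fixed point of φ and u = v⁻¹·φ(v) for some v ∈ G. -/
/-!
The fibres of `v ↦ v⁻¹ * φ v` are the right cosets of the fixed-point subgroup `C`, so the set
`K` of these elements has `|C| * |K| = |G|`, and the multiplication map `C × K → G` is injective
exactly when it is surjective. If `φ` has order coprime to `|G|`, then `C ∩ K = 1`: from
`φ v = v * e` with `e` fixed we get `(φ ^ i) v = v * e ^ i`, so `e ^ orderOf φ = 1`.
For abelian `G` this makes the multiplication map injective. For nilpotent `G`, surjectivity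
lifts from `G ⧸ center G` by induction: a lift `a` of a fixed point of the quotient has
`a⁻¹ * φ a` central, and decomposing it in the (abelian) centre moves `a` to a genuine fixed
point.
-/

open Subgroup Pointwise

namespace MulAut

variable {G : Type*} [Group G]

def fixedSubgroup (φ : MulAut G) : Subgroup G where
  carrier := {c | φ c = c}
  one_mem' := map_one φ
  mul_mem' {a b} (ha : φ a = a) (hb : φ b = b) := by simp [ha, hb]
  inv_mem' {a} (ha : φ a = a) := by simp [ha]

@[simp]
lemma mem_fixedSubgroup {φ : MulAut G} {c : G} : c ∈ φ.fixedSubgroup ↔ φ c = c := Iff.rfl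

def commutatorSet (φ : MulAut G) : Set G := Set.range fun v => v⁻¹ * φ v

lemma inv_mul_apply_mem_commutatorSet (φ : MulAut G) (v : G) :
    v⁻¹ * φ v ∈ φ.commutatorSet :=
  ⟨v, rfl⟩

lemma inv_mul_apply_eq_iff (φ : MulAut G) (v w : G) :
    v⁻¹ * φ v = w⁻¹ * φ w ↔ w * v⁻¹ ∈ φ.fixedSubgroup := by
  rw [mem_fixedSubgroup, map_mul, map_inv, mul_inv_eq_iff_eq_mul, eq_comm, inv_mul_eq_iff_eq_mul,
    mul_assoc]

lemma card_fixedSubgroup_mul_card_commutatorSet (φ : MulAut G) :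
    Nat.card φ.fixedSubgroup * Nat.card φ.commutatorSet = Nat.card G := by
  have hker : Setoid.ker (fun v => v⁻¹ * φ v) = QuotientGroup.rightRel φ.fixedSubgroup :=
    Setoid.ext fun v w => by rw [Setoid.ker_def, QuotientGroup.rightRel_apply, inv_mul_apply_eq_iff]
  rw [← φ.fixedSubgroup.card_mul_index, index_eq_card, commutatorSet,
    ← Nat.card_congr (Setoid.quotientKerEquivRange _), hker,
    Nat.card_congr (QuotientGroup.quotientRightRelEquivQuotientLeftRel _)]

lemma injOn_mul_iff_mul_eq_univ [Finite G] (φ : MulAut G) :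
    Set.InjOn (fun p : G × G => p.1 * p.2) ((φ.fixedSubgroup : Set G) ×ˢ φ.commutatorSet) ↔
      (φ.fixedSubgroup : Set G) * φ.commutatorSet = Set.univ := by
  have hcard : ((φ.fixedSubgroup : Set G) ×ˢ φ.commutatorSet).ncard = Nat.card G := by
    rw [Set.ncard_prod, ← Nat.card_coe_set_eq, ← Nat.card_coe_set_eq]
    exact φ.card_fixedSubgroup_mul_card_commutatorSet
  rw [← Set.image_mul_prod]
  refine ⟨fun h => Set.eq_of_subset_of_ncard_le (Set.subset_univ _) ?_,
    fun h => Set.injOn_of_ncard_image_eq ?_⟩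
  · rw [h.ncard_image, hcard, Set.ncard_univ]
  · rw [h, hcard, Set.ncard_univ]

def quotient (N : Subgroup G) [N.Characteristic] : MulAut G →* MulAut (G ⧸ N) where
  toFun φ := QuotientGroup.congr N N φ (characteristic_iff_map_eq.mp inferInstance φ)
  map_one' := MulEquiv.ext fun q => QuotientGroup.induction_on q fun _ => rfl
  map_mul' _ _ := MulEquiv.ext fun q => QuotientGroup.induction_on q fun _ => rfl

@[simp]
lemma quotient_apply_mk (N : Subgroup G) [N.Characteristic] (φ : MulAut G) (x : G) :
    quotient N φ x = φ x := rfl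

lemma coprime_orderOf_map {H : Type*} [Group H] (f : MulAut G →* MulAut H) {φ : MulAut G}
    (hcop : (orderOf φ).Coprime (Nat.card G)) (hH : Nat.card H ∣ Nat.card G) :
    (orderOf (f φ)).Coprime (Nat.card H) :=
  (hcop.coprime_dvd_right hH).coprime_dvd_left (orderOf_map_dvd f φ)

lemma inv_mul_apply_mul_of_mem_center (φ : MulAut G) (a : G) {z : G} (hz : z ∈ center G) :
    (a * z)⁻¹ * φ (a * z) = (a⁻¹ * φ a) * (z⁻¹ * φ z) := by
  have hcomm := mem_center_iff.mp (inv_mem hz) (a⁻¹ * φ a)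
  calc (a * z)⁻¹ * φ (a * z) = z⁻¹ * (a⁻¹ * φ a) * φ z := by rw [map_mul]; group
    _ = (a⁻¹ * φ a) * (z⁻¹ * φ z) := by rw [← hcomm, mul_assoc]

lemma eq_one_of_mem_fixedSubgroup_of_mem_commutatorSet {φ : MulAut G}
    (hcop : (orderOf φ).Coprime (Nat.card G)) {e : G} (hfix : e ∈ φ.fixedSubgroup)
    (hcomm : e ∈ φ.commutatorSet) : e = 1 := by
  obtain ⟨v, hv⟩ := hcomm
  have hpow (i : ℕ) : (φ ^ i) v = v * e ^ i := by
    induction i with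
    | zero => simp
    | succ i ih =>
      rw [pow_succ', mul_apply, ih, map_mul, map_pow, mem_fixedSubgroup.mp hfix,
        inv_mul_eq_iff_eq_mul.mp hv, mul_assoc, ← pow_succ']
  have he : e ^ orderOf φ = 1 := by
    simpa [pow_orderOf_eq_one] using (hpow (orderOf φ)).symm
  exact orderOf_eq_one_iff.mp
    (Nat.eq_one_of_dvd_coprimes hcop (orderOf_dvd_of_pow_eq_one he) (orderOf_dvd_natCard e))

lemma fixedSubgroup_mul_commutatorSet_eq_univ_of_commGroup {A : Type*} [CommGroup A] [Finite A]
    {φ : MulAut A} (hcop : (orderOf φ).Coprime (Nat.card A)) :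
    (φ.fixedSubgroup : Set A) * φ.commutatorSet = Set.univ := by
  refine φ.injOn_mul_iff_mul_eq_univ.mp ?_
  rintro ⟨c₁, k₁⟩ ⟨hc₁, v₁, rfl⟩ ⟨c₂, k₂⟩ ⟨hc₂, v₂, rfl⟩ h
  dsimp only at h
  have hc : c₂⁻¹ * c₁ = (v₂⁻¹ * φ v₂) * (v₁⁻¹ * φ v₁)⁻¹ := by
    rw [inv_mul_eq_iff_eq_mul, ← mul_assoc, eq_mul_inv_iff_mul_eq, h]
  have hk : (v₂⁻¹ * φ v₂) * (v₁⁻¹ * φ v₁)⁻¹ =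
      (v₂ * v₁⁻¹)⁻¹ * φ (v₂ * v₁⁻¹) := by
    simp only [map_mul, map_inv, mul_inv_rev, inv_inv, mul_assoc, mul_comm, mul_left_comm]
  have h1 : c₂⁻¹ * c₁ = 1 := eq_one_of_mem_fixedSubgroup_of_mem_commutatorSet hcop
    (mul_mem (inv_mem hc₂) hc₁) ⟨v₂ * v₁⁻¹, by rw [hc, hk]⟩
  obtain rfl := inv_mul_eq_one.mp h1
  exact congrArg (Prod.mk c₂) (mul_right_inj c₂ |>.mp h)

variable [Finite G]

open scoped IsMulCommutative in
lemma exists_fixed_mul_commutator_of_mem_center {φ : MulAut G}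
    (hcop : (orderOf φ).Coprime (Nat.card G)) {z : G} (hz : z ∈ center G) :
    ∃ e ∈ center G, ∃ p ∈ center G, φ e = e ∧ z = e * (p⁻¹ * φ p) := by
  have hZ := fixedSubgroup_mul_commutatorSet_eq_univ_of_commGroup
    (coprime_orderOf_map (characteristic (center G)) hcop (card_subgroup_dvd_card _))
  obtain ⟨e, he, _, ⟨p, rfl⟩, hz⟩ :=
    Set.mem_mul.mp (hZ ▸ Set.mem_univ (⟨z, hz⟩ : center G))
  exact ⟨e, e.2, p, p.2, congrArg Subtype.val he, congrArg Subtype.val hz.symm⟩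

lemma exists_mul_mem_fixedSubgroup_of_inv_mul_apply_mem_center {φ : MulAut G}
    (hcop : (orderOf φ).Coprime (Nat.card G)) {a : G} (ha : a⁻¹ * φ a ∈ center G) :
    ∃ z ∈ center G, a * z ∈ φ.fixedSubgroup := by
  obtain ⟨e, -, p, hp, he, hae⟩ := exists_fixed_mul_commutator_of_mem_center hcop ha
  have hρ : (a * p⁻¹)⁻¹ * φ (a * p⁻¹) = e := by
    rw [inv_mul_apply_mul_of_mem_center φ a (inv_mem hp), hae, mul_assoc,
      ← inv_mul_apply_mul_of_mem_center φ p (inv_mem hp), mul_inv_cancel, inv_one, map_one,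
      mul_one, mul_one]
  have he1 : e = 1 := eq_one_of_mem_fixedSubgroup_of_mem_commutatorSet hcop he ⟨_, hρ⟩
  refine ⟨p⁻¹, inv_mem hp, ?_⟩
  rwa [he1, inv_mul_eq_one, eq_comm] at hρ

lemma fixedSubgroup_mul_commutatorSet_eq_univ_of_quotient_center {φ : MulAut G}
    (hcop : (orderOf φ).Coprime (Nat.card G))
    (hQ : ((quotient (center G) φ).fixedSubgroup : Set (G ⧸ center G)) *
      (quotient (center G) φ).commutatorSet = Set.univ) :
    (φ.fixedSubgroup : Set G) * φ.commutatorSet = Set.univ := by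
  refine Set.eq_univ_of_forall fun g => ?_
  obtain ⟨c, hc, _, ⟨v, rfl⟩, hg⟩ :=
    Set.mem_mul.mp (hQ ▸ Set.mem_univ (g : G ⧸ center G))
  obtain ⟨v, rfl⟩ := QuotientGroup.mk_surjective v
  set a := g * (v⁻¹ * φ v)⁻¹ with ha_def
  have hmk : (a : G ⧸ center G) = c := by
    simp only [ha_def, QuotientGroup.mk_mul, QuotientGroup.mk_inv, ← hg, quotient_apply_mk]
    group
  have ha : a⁻¹ * φ a ∈ center G := by
    rw [← QuotientGroup.eq, ← quotient_apply_mk, hmk, mem_fixedSubgroup.mp hc]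
  obtain ⟨z, hz, haz⟩ := exists_mul_mem_fixedSubgroup_of_inv_mul_apply_mem_center hcop ha
  obtain ⟨e, he, p, hp, hfix, hze⟩ :=
    exists_fixed_mul_commutator_of_mem_center hcop (inv_mem hz)
  have hρp : p⁻¹ * φ p ∈ center G := by
    rw [eq_inv_mul_of_mul_eq hze.symm]
    exact mul_mem (inv_mem he) (inv_mem hz)
  refine Set.mem_mul.mpr
    ⟨a * z * e, mul_mem haz hfix, _, inv_mul_apply_mem_commutatorSet φ (v * p), ?_⟩
  calc a * z * e * ((v * p)⁻¹ * φ (v * p))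
      = a * z * e * ((p⁻¹ * φ p) * (v⁻¹ * φ v)) := by
        rw [inv_mul_apply_mul_of_mem_center φ v hp, mem_center_iff.mp hρp]
    _ = a * (z * (e * (p⁻¹ * φ p))) * (v⁻¹ * φ v) := by group
    _ = g := by rw [← hze, mul_inv_cancel, mul_one, ha_def, inv_mul_cancel_right]

theorem fixedSubgroup_mul_commutatorSet_eq_univ [Group.IsNilpotent G] {φ : MulAut G}
    (hcop : (orderOf φ).Coprime (Nat.card G)) :
    (φ.fixedSubgroup : Set G) * φ.commutatorSet = Set.univ := by
  revert φ
  refine Group.nilpotent_center_quotient_ind (P := fun G _ _ => ∀ [Finite G] {φ : MulAut G},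
    (orderOf φ).Coprime (Nat.card G) → (φ.fixedSubgroup : Set G) * φ.commutatorSet = Set.univ)
    G ?_ ?_
  · intro G _ _ _ φ _
    refine Set.eq_univ_of_forall fun g => Subsingleton.elim (1 : G) g ▸ ?_
    exact Set.mem_mul.mpr ⟨1, one_mem _, 1, ⟨1, by simp⟩, one_mul 1⟩
  · intro G _ _ IH _ φ hcop
    exact fixedSubgroup_mul_commutatorSet_eq_univ_of_quotient_center hcop
      (IH (coprime_orderOf_map (quotient (center G)) hcop (card_quotient_dvd_card _)))

end MulAut

/-- Let `φ` be an automorphism of a finite nilpotent group `G` of order coprime to `|G|`.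
Then every `g ∈ G` can be written uniquely as `g = c * u` where `c` is a fixed point of `φ`
and `u = v⁻¹ * φ v` for some `v ∈ G`. -/
theorem coprime_aut_unique_decomposition
    {G : Type*} [Group G] [Finite G] [Group.IsNilpotent G]
    (φ : MulAut G) (hcop : Nat.Coprime (orderOf φ) (Nat.card G)) (g : G) :
    ∃! cu : G × G, φ cu.1 = cu.1 ∧ (∃ v : G, cu.2 = v⁻¹ * φ v) ∧ g = cu.1 * cu.2 := by
  have hdecomp := MulAut.fixedSubgroup_mul_commutatorSet_eq_univ hcop
  have hinj := φ.injOn_mul_iff_mul_eq_univ.mpr hdecomp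
  obtain ⟨c, hc, k, ⟨v, hv⟩, hg⟩ := Set.mem_mul.mp (hdecomp ▸ Set.mem_univ g)
  refine ⟨(c, k), ⟨hc, ⟨v, hv.symm⟩, hg.symm⟩, ?_⟩
  rintro ⟨c', k'⟩ ⟨hc', ⟨v', rfl⟩, hg'⟩
  exact hinj ⟨hc', v', rfl⟩ ⟨hc, v, hv⟩ (hg'.symm.trans hg.symm)
end

section
/- Let φ be an automorphism of a finite nilpotent group G of order coprime to |G|. Then the map θ : x ↦ x⁻¹·φ(x), restricted to the set K = {g⁻¹ φ(g) : g ∈ G}, is injective (equivalently, bijective from K to K). -/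
/-!
Write `θ x = x⁻¹ * φ x`. If `c = θ u` is fixed by `φ`, then `φ u = u * c` gives
`(φ ^ k) u = u * c ^ k`, so `c ^ orderOf φ = 1` and coprimality forces `c = 1`.
For `a = θ g` and `b = θ h` with `θ a = θ b`, the element `d = b * a⁻¹` is `φ`-fixed and
`θ (h * g⁻¹) = g * d * g⁻¹`; when `a` and `b` commute this conjugate is `φ`-fixed too, hence
trivial, and `a = b`. In a nilpotent group, induction on the nilpotency class shows that
`a⁻¹ * b` lies in the centre, so `a` and `b` do commute.
-/

namespace MulAut

variable {G : Type*} [Group G]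

def quotientHom (N : Subgroup G) [N.Characteristic] : MulAut G →* MulAut (G ⧸ N) where
  toFun φ := QuotientGroup.congr N N φ (Subgroup.characteristic_iff_map_eq.mp ‹_› φ)
  map_one' := by
    ext x
    induction x using QuotientGroup.induction_on
    rfl
  map_mul' φ ψ := by
    ext x
    induction x using QuotientGroup.induction_on
    rfl

theorem mk_inv_mul_apply (N : Subgroup G) [N.Characteristic] (φ : MulAut G) (x : G) :
    ((x⁻¹ * φ x : G) : G ⧸ N) = (x : G ⧸ N)⁻¹ * quotientHom N φ x :=
  rfl

theorem coprime_orderOf_quotientHom (N : Subgroup G) [N.Characteristic] {φ : MulAut G}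
    (hcop : (orderOf φ).Coprime (Nat.card G)) :
    (orderOf (quotientHom N φ)).Coprime (Nat.card (G ⧸ N)) :=
  (hcop.coprime_dvd_left (orderOf_map_dvd _ φ)).coprime_dvd_right
    (Subgroup.card_quotient_dvd_card N)

variable (φ : MulAut G)

theorem inv_mul_apply_eq_iff_s5 {x y : G} :
    x⁻¹ * φ x = y⁻¹ * φ y ↔ φ (y * x⁻¹) = y * x⁻¹ := by
  rw [map_mul, map_inv, mul_inv_eq_iff_eq_mul, eq_inv_mul_iff_mul_eq, eq_comm, mul_assoc]

theorem inv_mul_apply_mul_inv (g h : G) :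
    (h * g⁻¹)⁻¹ * φ (h * g⁻¹) = g * ((h⁻¹ * φ h) * (g⁻¹ * φ g)⁻¹) * g⁻¹ := by
  simp only [map_mul, map_inv]
  group

theorem pow_apply_of_apply_eq_mul {u c : G} (hc : φ c = c) (hu : φ u = u * c) (k : ℕ) :
    (φ ^ k) u = u * c ^ k := by
  induction k with
  | zero => simp
  | succ k ih => rw [pow_succ', mul_apply, ih, map_mul, hu, map_pow, hc, pow_succ', mul_assoc]

theorem inv_mul_apply_eq_one_of_fixed (hcop : (orderOf φ).Coprime (Nat.card G)) {u : G}
    (hfix : φ (u⁻¹ * φ u) = u⁻¹ * φ u) : u⁻¹ * φ u = 1 := by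
  set c := u⁻¹ * φ u
  have hc : c ^ orderOf φ = 1 := by
    have := pow_apply_of_apply_eq_mul φ hfix (mul_inv_cancel_left u (φ u)).symm (orderOf φ)
    rwa [pow_orderOf_eq_one, one_apply, left_eq_mul] at this
  exact orderOf_eq_one_iff.mp <| Nat.eq_one_of_dvd_coprimes hcop
    (orderOf_dvd_of_pow_eq_one hc) (orderOf_dvd_natCard c)

theorem inv_mul_apply_eq_of_commute (hcop : (orderOf φ).Coprime (Nat.card G)) {g h : G}
    (hcomm : Commute (g⁻¹ * φ g) (h⁻¹ * φ h))
    (heq : (g⁻¹ * φ g)⁻¹ * φ (g⁻¹ * φ g) = (h⁻¹ * φ h)⁻¹ * φ (h⁻¹ * φ h)) :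
    g⁻¹ * φ g = h⁻¹ * φ h := by
  set a := g⁻¹ * φ g
  set d := (h⁻¹ * φ h) * a⁻¹
  have hd : φ d = d := (inv_mul_apply_eq_iff_s5 φ).mp heq
  have had : Commute a d := hcomm.mul_right (Commute.refl a).inv_right
  have hconj : (h * g⁻¹)⁻¹ * φ (h * g⁻¹) = g * d * g⁻¹ := inv_mul_apply_mul_inv φ g h
  have hfix : φ (g * d * g⁻¹) = g * d * g⁻¹ := by
    rw [map_mul, map_mul, map_inv, hd, show φ g = g * a from (mul_inv_cancel_left g _).symm,
      mul_assoc g a d, had.eq]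
    group
  rw [← hconj] at hfix
  have hd_one := inv_mul_apply_eq_one_of_fixed φ hcop hfix
  rw [hconj, conj_eq_one_iff, mul_inv_eq_one] at hd_one
  exact hd_one.symm

end MulAut

open MulAut in
theorem coprime_aut_commutator_map_injOn_general
    {G : Type*} [Group G] [Group.IsNilpotent G]
    (φ : MulAut G) (hcop : Nat.Coprime (orderOf φ) (Nat.card G)) :
    Set.InjOn (fun x : G => x⁻¹ * φ x) {x : G | ∃ g : G, x = g⁻¹ * φ g} := by
  revert φ
  refine Group.nilpotent_center_quotient_ind (P := fun G _ _ => ∀ φ : MulAut G,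
    (orderOf φ).Coprime (Nat.card G) →
      Set.InjOn (fun x : G => x⁻¹ * φ x) {x : G | ∃ g : G, x = g⁻¹ * φ g}) G ?_ ?_
  · exact fun G _ _ _ _ a _ b _ _ => Subsingleton.elim a b
  intro G _ _ ih φ hcop
  rintro _ ⟨g, rfl⟩ _ ⟨h, rfl⟩ heq
  have hmod : ((g⁻¹ * φ g : G) : G ⧸ Subgroup.center G) = ((h⁻¹ * φ h : G) : G ⧸ _) := by
    have := ih _ (coprime_orderOf_quotientHom _ hcop) ⟨g, rfl⟩ ⟨h, rfl⟩
    simp only [← mk_inv_mul_apply] at this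
    exact this (congrArg _ heq)
  have hcomm : Commute (g⁻¹ * φ g) (h⁻¹ * φ h) := by
    have hcentral := Subgroup.mem_center_iff.mp (QuotientGroup.eq.mp hmod) (g⁻¹ * φ g)
    simpa only [mul_inv_cancel_left] using (Commute.refl _).mul_right hcentral
  exact inv_mul_apply_eq_of_commute φ hcop hcomm heq

/-- Let `φ` be an automorphism of a finite nilpotent group `G` of order coprime to `|G|`.
Then the map `θ : x ↦ x⁻¹ * φ x` is injective on the set `K = {g⁻¹ * φ g : g ∈ G}`. -/
theorem coprime_aut_commutator_map_injOn
    {G : Type*} [Group G] [Finite G] [Group.IsNilpotent G]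
    (φ : MulAut G) (hcop : Nat.Coprime (orderOf φ) (Nat.card G)) :
    Set.InjOn (fun x : G => x⁻¹ * φ x) {x : G | ∃ g : G, x = g⁻¹ * φ g} :=
  coprime_aut_commutator_map_injOn_general φ hcop
end

section
/- Let φ be an automorphism of a finite group G with gcd(|φ|, |G|) = 1, and let N be a normal φ-invariant subgroup of G. Then every fixed point of the induced automorphism of G/N is the image of a fixed point of φ in G; that is, C_{G/N}(φ) = C_G(φ)·N / N. -/
/-!
A fixed point of the induced automorphism is a coset `gN` stable under the cyclic group
`A = ⟨φ⟩`. For any nilpotent `A` of order prime to `|G|` we find an `A`-fixed point in such a coset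
by induction on `|A|`. A Sylow `p`-subgroup `P` of `A` permutes `gN`, a set of size `|N|` prime to
`p`, so it fixes some `u ∈ gN`. Then `A ⧸ P` acts on the subgroup `C_G(P)` of `P`-fixed points and
stabilises its coset `u (N ∩ C_G(P))`; a fixed point of `A ⧸ P` there is fixed by all of `A`.
-/

open MulAction Pointwise

theorem Set.Finite.smul_mem_of_mem_zpowers {M α : Type*} [Group M] [MulAction M α] {s : Set α}
    (hs : s.Finite) {m : M} (hm : ∀ x ∈ s, m • x ∈ s) {σ : M} (hσ : σ ∈ Subgroup.zpowers m)
    {x : α} (hx : x ∈ s) : σ • x ∈ s :=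
  (mem_stabilizer_set' hs).1 (Subgroup.zpowers_le.2 ((mem_stabilizer_set' hs).2 hm) hσ) hx

theorem smul_mem_leftCoset {M G : Type*} [Monoid M] [Group G] [MulDistribMulAction M G]
    {N : Subgroup G} {m : M} (hN : ∀ n ∈ N, m • n ∈ N) {g : G} (hg : m • g ∈ g • (N : Set G))
    {x : G} (hx : x ∈ g • (N : Set G)) : m • x ∈ g • (N : Set G) := by
  rw [mem_leftCoset_iff] at hg hx ⊢
  have : g⁻¹ * m • x = (g⁻¹ * m • g) * m • (g⁻¹ * x) := by
    rw [smul_mul', smul_inv']; group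
  rw [this]
  exact N.mul_mem hg (hN _ hx)

theorem IsPGroup.exists_fixed_mem_of_not_dvd_ncard {p : ℕ} [Fact p.Prime] {P α : Type*} [Group P]
    [MulAction P α] (hP : IsPGroup p P) {s : Set α} (hs : ∀ m : P, ∀ x ∈ s, m • x ∈ s)
    (hps : ¬p ∣ s.ncard) : ∃ x ∈ s, ∀ m : P, m • x = x := by
  let S : SubMulAction P α := ⟨s, fun {m x} hx => hs m x hx⟩
  obtain ⟨⟨x, hx⟩, hfix⟩ := hP.nonempty_fixed_point_of_prime_not_dvd_card S hps
  exact ⟨x, hx, fun m => congrArg Subtype.val (hfix m)⟩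

theorem Subgroup.mem_leftCoset_subgroupOf_iff {G : Type*} [Group G] {N K : Subgroup G} {x y : K} :
    x ∈ y • (N.subgroupOf K : Set K) ↔ (x : G) ∈ (y : G) • (N : Set G) := by
  simp [mem_leftCoset_iff, Subgroup.mem_subgroupOf]

theorem exists_fixed_mem_leftCoset_of_coprime {A G : Type*} [Group A] [Group.IsNilpotent A]
    [Finite A] [Group G] [MulDistribMulAction A G]
    (hcop : (Nat.card A).Coprime (Nat.card G)) {N : Subgroup G} (hN : ∀ a : A, ∀ n ∈ N, a • n ∈ N)
    {g : G} (hg : ∀ a : A, a • g ∈ g • (N : Set G)) :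
    ∃ h ∈ g • (N : Set G), ∀ a : A, a • h = h := by
  induction hA : Nat.card A using Nat.strong_induction_on generalizing A G with
  | _ n ih =>
  obtain rfl | hn := eq_or_ne n 1
  · have : Subsingleton A := (Nat.card_eq_one_iff_unique.mp hA).1
    refine ⟨g, mem_own_leftCoset N.toSubmonoid g, fun a => ?_⟩
    rw [Subsingleton.elim a 1, one_smul]
  set p := Nat.minFac n
  have hp : p.Prime := Nat.minFac_prime hn
  have : Fact p.Prime := ⟨hp⟩
  have hpA : p ∣ Nat.card A := hA ▸ Nat.minFac_dvd n
  let P : Sylow p A := default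
  have hcoset : ∀ a : A, ∀ x ∈ g • (N : Set G), a • x ∈ g • (N : Set G) :=
    fun a _ => smul_mem_leftCoset (hN a) (hg a)
  have hpN : ¬p ∣ Nat.card N := fun hpN => hp.one_lt.ne'
    (Nat.eq_one_of_dvd_coprimes hcop hpA (hpN.trans N.card_subgroup_dvd_card))
  obtain ⟨u, hu, hPu⟩ := P.isPGroup'.exists_fixed_mem_of_not_dvd_ncard
    (fun m => hcoset m) (by rwa [Set.ncard_smul_set, ← Nat.card_coe_set_eq])
  have hgu : g • (N : Set G) = u • N := (leftCoset_eq_iff N).2 ((mem_leftCoset_iff g).1 hu)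
  rw [hgu] at hcoset ⊢
  let C := FixedPoints.subgroup P G
  have hlt : Nat.card (A ⧸ (P : Subgroup A)) < n := by
    have hP : 1 < Nat.card P := (Subgroup.one_lt_card_iff_ne_bot _).2 (P.ne_bot_of_dvd_card hpA)
    rw [← hA, Subgroup.card_eq_card_quotient_mul_card_subgroup (P : Subgroup A)]
    exact lt_mul_of_one_lt_right Nat.card_pos hP
  have hcop' : (Nat.card (A ⧸ (P : Subgroup A))).Coprime (Nat.card C) :=
    (hcop.coprime_dvd_left (Subgroup.card_quotient_dvd_card _)).coprime_dvd_right
      C.card_subgroup_dvd_card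
  have hN' : ∀ a : A ⧸ (P : Subgroup A), ∀ n ∈ N.subgroupOf C, a • n ∈ N.subgroupOf C := by
    rintro ⟨a⟩ n hn
    exact hN a n hn
  have hu' : ∀ a : A ⧸ (P : Subgroup A),
      a • (⟨u, hPu⟩ : C) ∈ (⟨u, hPu⟩ : C) • (N.subgroupOf C : Set C) := by
    rintro ⟨a⟩
    exact Subgroup.mem_leftCoset_subgroupOf_iff.2 (hcoset a u (mem_own_leftCoset N.toSubmonoid u))
  obtain ⟨h, hh, hfix⟩ := ih _ hlt hcop' hN' hu' rfl
  exact ⟨h, Subgroup.mem_leftCoset_subgroupOf_iff.1 hh, fun a => congrArg Subtype.val (hfix a)⟩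

/-- Let `φ` be an automorphism of a finite group `G` of order coprime to `|G|`, and `N` a
normal `φ`-invariant subgroup.  Then every fixed point of the induced automorphism of
`G ⧸ N` is the image of a fixed point of `φ` in `G`. -/
theorem coprime_aut_fixed_points_of_quotient
    {G : Type*} [Group G] [Finite G]
    (φ : MulAut G) (hcop : Nat.Coprime (orderOf φ) (Nat.card G))
    (N : Subgroup G) [N.Normal] (hinv : ∀ n ∈ N, φ n ∈ N)
    (x : G ⧸ N)
    (hx : QuotientGroup.map N N φ.toMonoidHom (fun n hn => hinv n hn) x = x) :
    ∃ g : G, φ g = g ∧ (g : G ⧸ N) = x := by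
  obtain ⟨g, rfl⟩ := QuotientGroup.mk_surjective x
  have hφg : φ g ∈ g • (N : Set G) := (mem_leftCoset_iff g).2 (QuotientGroup.eq.1 hx.symm)
  have : Group.IsNilpotent (Subgroup.zpowers φ) := by
    let := IsCyclic.commGroup (α := Subgroup.zpowers φ)
    infer_instance
  obtain ⟨h, hh, hfix⟩ := exists_fixed_mem_leftCoset_of_coprime (A := Subgroup.zpowers φ)
    (by rwa [Nat.card_zpowers]) (N := N)
    (fun σ n hn => (N : Set G).toFinite.smul_mem_of_mem_zpowers hinv σ.2 hn)
    (fun σ => (g • (N : Set G)).toFinite.smul_mem_of_mem_zpowers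
      (fun _ => smul_mem_leftCoset hinv hφg) σ.2 (mem_own_leftCoset N.toSubmonoid g))
  exact ⟨h, hfix ⟨φ, Subgroup.mem_zpowers φ⟩,
    (QuotientGroup.eq.2 ((mem_leftCoset_iff g).1 hh)).symm⟩
end

section
/- Let φ be an automorphism of a finite group G of order coprime to |G|. Then [[G,φ],φ] = [G,φ], where [G,φ] is the subgroup generated by all g⁻¹·φ(g). -/
/-!
Write `N = [G, φ]`, `M = [N, φ]` and `k = g⁻¹ φ(g)`. Since `N` normalizes `M` and
`φ(k) ≡ k` modulo `M`, induction gives `φʲ(g) ∈ g kʲ M`; taking `j = |φ|` yields `k^|φ| ∈ M`,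
and as `|φ|` is coprime to the order of `k`, also `k ∈ M`. So `N ≤ M ≤ N`.
-/

open Subgroup

namespace Subgroup

variable {G : Type*} [Group G] {M : Subgroup G}

theorem exists_mem_mul_pow_eq_pow_mul {k m : G} (hk : k ∈ normalizer (M : Set G))
    (hm : m ∈ M) (j : ℕ) : ∃ m' ∈ M, (k * m) ^ j = k ^ j * m' := by
  induction j with
  | zero => exact ⟨1, one_mem M, by simp⟩
  | succ j ih =>
    obtain ⟨m', hm', hpow⟩ := ih
    refine ⟨k⁻¹ * m' * k * m, mul_mem ((mem_normalizer_iff''.1 hk m').1 hm') hm, ?_⟩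
    rw [pow_succ, hpow, pow_succ]
    group

theorem mem_of_pow_mem_of_coprime {k : G} {n : ℕ} (hkn : k ^ n ∈ M)
    (hn : n.Coprime (orderOf k)) : k ∈ M := by
  obtain ⟨b, hb⟩ := exists_pow_eq_self_of_coprime hn
  exact hb ▸ pow_mem hkn b

end Subgroup

namespace MulAut

variable {G : Type*} [Group G] (φ : MulAut G)

/-- The subgroup `[H, φ]`. -/
def autCommutator (H : Subgroup G) : Subgroup G :=
  closure {x | ∃ g ∈ H, x = g⁻¹ * φ g}

variable {φ} {H : Subgroup G}

theorem autCommutator_le (hH : ∀ g ∈ H, φ g ∈ H) : autCommutator φ H ≤ H :=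
  (closure_le _).2 <| by
    rintro _ ⟨g, hg, rfl⟩
    exact mul_mem (inv_mem hg) (hH g hg)

theorem apply_mem_autCommutator (hH : ∀ g ∈ H, φ g ∈ H) {m : G}
    (hm : m ∈ autCommutator φ H) : φ m ∈ autCommutator φ H := by
  have hmap : (autCommutator φ H).map φ.toMonoidHom ≤ autCommutator φ H := by
    rw [autCommutator, MonoidHom.map_closure, closure_le]
    rintro _ ⟨_, ⟨g, hg, rfl⟩, rfl⟩
    exact subset_closure ⟨φ g, hH g hg, by simp⟩
  exact hmap ⟨m, hm, rfl⟩

theorem le_normalizer_autCommutator : H ≤ normalizer (autCommutator φ H : Set G) := by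
  refine le_normalizer_closure_iff.2 ?_
  rintro h hh _ ⟨g, hg, rfl⟩
  have hconj : h * (g⁻¹ * φ g) * h⁻¹
      = (g * h⁻¹)⁻¹ * φ (g * h⁻¹) * ((h⁻¹)⁻¹ * φ h⁻¹)⁻¹ := by
    simp [mul_assoc]
  rw [hconj]
  exact mul_mem (subset_closure ⟨g * h⁻¹, mul_mem hg (inv_mem hh), rfl⟩)
    (inv_mem (subset_closure ⟨h⁻¹, inv_mem hh, rfl⟩))

variable {M : Subgroup G}

theorem exists_pow_apply_eq_mul_pow_mul (hM : ∀ m ∈ M, φ m ∈ M) {g : G}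
    (hk : g⁻¹ * φ g ∈ normalizer (M : Set G)) (hφk : (g⁻¹ * φ g)⁻¹ * φ (g⁻¹ * φ g) ∈ M)
    (j : ℕ) : ∃ m ∈ M, (φ ^ j) g = g * (g⁻¹ * φ g) ^ j * m := by
  set k := g⁻¹ * φ g
  have hφg : φ g = g * k := (mul_inv_cancel_left g _).symm
  obtain ⟨m₁, hm₁, hφk'⟩ : ∃ m₁ ∈ M, φ k = k * m₁ := ⟨_, hφk, (mul_inv_cancel_left k _).symm⟩
  induction j with
  | zero => exact ⟨1, one_mem M, by simp⟩
  | succ j ih =>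
    obtain ⟨m, hm, hφj⟩ := ih
    obtain ⟨m', hm', hpow⟩ := exists_mem_mul_pow_eq_pow_mul hk hm₁ j
    refine ⟨m' * φ m, mul_mem hm' (hM m hm), ?_⟩
    calc (φ ^ (j + 1)) g = φ (g * k ^ j * m) := by rw [pow_succ', mul_apply, hφj]
      _ = g * k * (k * m₁) ^ j * φ m := by rw [map_mul, map_mul, map_pow, hφk', hφg]
      _ = g * k ^ (j + 1) * (m' * φ m) := by rw [hpow, pow_succ]; group

theorem pow_orderOf_mem (hM : ∀ m ∈ M, φ m ∈ M) {g : G}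
    (hk : g⁻¹ * φ g ∈ normalizer (M : Set G)) (hφk : (g⁻¹ * φ g)⁻¹ * φ (g⁻¹ * φ g) ∈ M) :
    (g⁻¹ * φ g) ^ orderOf φ ∈ M := by
  obtain ⟨m, hm, hφg⟩ := exists_pow_apply_eq_mul_pow_mul hM hk hφk (orderOf φ)
  rw [pow_orderOf_eq_one, one_apply, mul_assoc, left_eq_mul, mul_eq_one_iff_eq_inv] at hφg
  exact hφg ▸ inv_mem hm

end MulAut

open MulAut

theorem coprime_aut_commutator_subgroup_idem_general
    {G : Type*} [Group G]
    (φ : MulAut G) (hcop : Nat.Coprime (orderOf φ) (Nat.card G)) :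
    Subgroup.closure {x : G | ∃ g ∈ Subgroup.closure {y : G | ∃ h : G, y = h⁻¹ * φ h},
        x = g⁻¹ * φ g}
      = Subgroup.closure {y : G | ∃ h : G, y = h⁻¹ * φ h} := by
  set N := Subgroup.closure {y : G | ∃ h : G, y = h⁻¹ * φ h}
  have hN : ∀ g ∈ N, φ g ∈ N := by
    have hNtop : N = autCommutator φ ⊤ := by simp [N, autCommutator]
    exact hNtop ▸ fun g => apply_mem_autCommutator fun x _ => mem_top (φ x)
  change autCommutator φ N = N
  refine le_antisymm (autCommutator_le hN) ((closure_le _).2 ?_)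
  rintro _ ⟨g, rfl⟩
  have hk : g⁻¹ * φ g ∈ N := subset_closure ⟨g, rfl⟩
  have hkn := pow_orderOf_mem (fun _ => apply_mem_autCommutator hN)
    (le_normalizer_autCommutator hk) (subset_closure ⟨_, hk, rfl⟩)
  exact mem_of_pow_mem_of_coprime hkn (hcop.coprime_dvd_right (orderOf_dvd_natCard _))

/-- Let `φ` be an automorphism of a finite group `G` of order coprime to `|G|`.
Then `[[G,φ],φ] = [G,φ]`, where `[G,φ] = ⟨g⁻¹ φ(g) : g ∈ G⟩` and `[[G,φ],φ]` is the
subgroup generated by the commutators `g⁻¹ φ(g)` with `g ∈ [G,φ]`. -/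
theorem coprime_aut_commutator_subgroup_idem
    {G : Type*} [Group G] [Finite G]
    (φ : MulAut G) (hcop : Nat.Coprime (orderOf φ) (Nat.card G)) :
    Subgroup.closure {x : G | ∃ g ∈ Subgroup.closure {y : G | ∃ h : G, y = h⁻¹ * φ h},
        x = g⁻¹ * φ g}
      = Subgroup.closure {y : G | ∃ h : G, y = h⁻¹ * φ h} :=
  coprime_aut_commutator_subgroup_idem_general φ hcop
end

section
/- Let P be a finite p-group generated by two elements a, y, nilpotent of class at most c, with a of order dividing p^n. Then [a, y^{p^{n(c-1)}}] = 1. -/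
/-!
Index the lower central series as Mathlib does, `γ_0 = P`. If `⁅a, z⁆ ∈ γ_{k+1}`, then `⁅a, z⁆` is
central modulo `γ_{k+2}`, where commutators with it are therefore bimultiplicative:
`⁅a, z ^ m⁆ = ⁅a, z⁆ ^ m = ⁅a ^ m, z⁆ = 1` when `a ^ m = 1`. So every `m`-th power of the second
argument moves the commutator one step down the series, `⁅a, y ^ m ^ k⁆ ∈ γ_{k+1}`, and with
`m = p ^ n`, `k = c - 1` it lands in `γ_c = 1`.
-/

open scoped commutatorElement
open Subgroup

section CentralCommutator

variable {G : Type*} [Group G] {a z : G}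

theorem commutatorElement_pow_left_of_mem_center (h : ⁅a, z⁆ ∈ center G) (j : ℕ) :
    ⁅a ^ j, z⁆ = ⁅a, z⁆ ^ j := by
  induction j with
  | zero => simp
  | succ j ih =>
    rw [pow_succ', commutatorElement_mul_left_eq_conj_mul, ih,
      (mem_center_iff.mp (pow_mem h j) a), mul_inv_cancel_right, pow_succ]

theorem commutatorElement_pow_right_of_mem_center (h : ⁅a, z⁆ ∈ center G) (j : ℕ) :
    ⁅a, z ^ j⁆ = ⁅a, z⁆ ^ j := by
  induction j with
  | zero => simp
  | succ j ih =>
    rw [pow_succ', commutatorElement_mul_right_eq_mul_conj, ih, mul_assoc _ z,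
      (mem_center_iff.mp (pow_mem h j) z), ← mul_assoc, mul_inv_cancel_right, pow_succ']

theorem commutatorElement_pow_eq_one_of_mem_center (h : ⁅a, z⁆ ∈ center G) {m : ℕ}
    (ha : a ^ m = 1) : ⁅a, z ^ m⁆ = 1 := by
  rw [commutatorElement_pow_right_of_mem_center h, ← commutatorElement_pow_left_of_mem_center h,
    ha, commutatorElement_one_left]

end CentralCommutator

section LowerCentralSeries

variable {G : Type*} [Group G] {a : G} {m : ℕ}

theorem commutatorElement_pow_mem_of_mem_upperCentralSeriesStep {N : Subgroup G} [N.Normal]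
    {z : G} (h : ⁅a, z⁆ ∈ N.upperCentralSeriesStep) (ha : a ^ m = 1) : ⁅a, z ^ m⁆ ∈ N := by
  rw [Subgroup.upperCentralSeriesStep_eq_comap_center, mem_comap, map_commutatorElement] at h
  rw [← QuotientGroup.ker_mk' N, MonoidHom.mem_ker, map_commutatorElement, map_pow]
  exact commutatorElement_pow_eq_one_of_mem_center h (by rw [← map_pow, ha, map_one])

theorem commutatorElement_pow_mem_lowerCentralSeries_succ {z : G} {k : ℕ}
    (h : ⁅a, z⁆ ∈ (⊤ : Subgroup G).lowerCentralSeries k) (ha : a ^ m = 1) :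
    ⁅a, z ^ m⁆ ∈ (⊤ : Subgroup G).lowerCentralSeries (k + 1) :=
  commutatorElement_pow_mem_of_mem_upperCentralSeriesStep
    (fun g => commutator_mem_commutator h (mem_top g)) ha

theorem commutatorElement_pow_pow_mem_lowerCentralSeries (ha : a ^ m = 1) (z : G) (k : ℕ) :
    ⁅a, z ^ m ^ k⁆ ∈ (⊤ : Subgroup G).lowerCentralSeries (k + 1) := by
  induction k with
  | zero =>
    rw [pow_zero, pow_one]
    exact commutator_mem_commutator (mem_top a) (mem_top z)
  | succ k ih =>
    rw [pow_succ, pow_mul]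
    exact commutatorElement_pow_mem_lowerCentralSeries_succ ih ha

end LowerCentralSeries

theorem commutator_power_trivial_in_p_group_general
    {P : Type*} [Group P] (p : ℕ)
    (c n : ℕ) (hc : (⊤ : Subgroup P).lowerCentralSeries c = ⊥)
    (a y : P)
    (ha : a ^ p ^ n = 1) :
    a⁻¹ * (y ^ p ^ (n * (c - 1)))⁻¹ * a * y ^ p ^ (n * (c - 1)) = 1 := by
  have hmem : ⁅a, y ^ p ^ (n * (c - 1))⁆ ∈ (⊤ : Subgroup P).lowerCentralSeries c := by
    rw [pow_mul]
    exact Subgroup.lowerCentralSeries_antitone _ (by omega)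
      (commutatorElement_pow_pow_mem_lowerCentralSeries ha y (c - 1))
  rw [hc, mem_bot, commutatorElement_eq_one_iff_commute] at hmem
  simpa [commutatorElement_def] using commutatorElement_eq_one_iff_commute.mpr hmem.inv_inv

/-- Let `P` be a finite `p`-group generated by two elements `a, y`, nilpotent of class at
most `c`, with `a` of order dividing `p^n`.  Then `[a, y^(p^(n*(c-1)))] = 1`. -/
theorem commutator_power_trivial_in_p_group
    {P : Type*} [Group P] [Finite P] (p : ℕ) (hp : p.Prime) (hP : IsPGroup p P)
    (c n : ℕ) (hc : (⊤ : Subgroup P).lowerCentralSeries c = ⊥)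
    (a y : P) (hgen : Subgroup.closure {a, y} = (⊤ : Subgroup P))
    (ha : a ^ p ^ n = 1) :
    a⁻¹ * (y ^ p ^ (n * (c - 1)))⁻¹ * a * y ^ p ^ (n * (c - 1)) = 1 :=
  commutator_power_trivial_in_p_group_general p c n hc a y ha
end

section
/- Let G be an abelian divisible group written as a direct product A₀ × ∏_p A_p of a torsion-free divisible group A₀ and divisible p-groups A_p, and let η be an automorphism of G of prime order p acting trivially on the torsion subgroup ∏_q A_q and trivially on the torsion-free quotient G/∏_q A_q. Then η acts trivially on G. -/
/-!
Put `δ a = η a - a`. Since `δ a` is torsion, `η` fixes it, so `δ ∘ δ = 0` and hence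
`ηᵏ = 1 + k δ`; then `ηᵖ = 1` forces `p δ = 0`. Finally `δ` vanishes because every
element is `p`-divisible: `δ (p b) = p δ b = 0`.
-/

theorem AddMonoidHom.apply_eq_zero_of_nsmul_apply_eq_zero {A B : Type*} [AddMonoid A]
    [AddMonoid B] (f : A →+ B) {n : ℕ} (hdiv : ∀ a : A, ∃ b, n • b = a)
    (hf : ∀ a, n • f a = 0) (a : A) : f a = 0 := by
  obtain ⟨b, rfl⟩ := hdiv a
  rw [map_nsmul, hf]

namespace AddAut

variable {A : Type*} [AddCommGroup A] {η : AddAut A}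

theorem nsmul_apply_eq_add_nsmul_sub (hfix : ∀ x, η (η x - x) = η x - x) (k : ℕ) (x : A) :
    (k • η) x = x + k • (η x - x) := by
  induction k with
  | zero => simp
  | succ k ih =>
    rw [succ_nsmul', add_apply, ih, map_add, map_nsmul, hfix, succ_nsmul]
    abel

theorem nsmul_apply_sub_eq_zero_of_nsmul_eq_zero (hfix : ∀ x, η (η x - x) = η x - x) {n : ℕ}
    (hn : n • η = 0) (x : A) : n • (η x - x) = 0 := by
  simpa [hn] using (nsmul_apply_eq_add_nsmul_sub hfix n x).symm

end AddAut

/-- Let `A` be a divisible abelian group and `η` an automorphism of prime order `p` which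
fixes every torsion element and induces the identity modulo the torsion subgroup (i.e.
`η a - a` is torsion for every `a`).  Then `η` is the identity. -/
theorem aut_trivial_of_trivial_on_torsion_and_quotient
    {A : Type*} [AddCommGroup A]
    (hdiv : ∀ (a : A) (n : ℕ), 0 < n → ∃ b : A, n • b = a)
    (η : AddAut A) (p : ℕ) (hp : p.Prime) (hord : p • η = 0)
    (htor : ∀ a : A, (∃ n : ℕ, 0 < n ∧ n • a = 0) → η a = a)
    (hquot : ∀ a : A, ∃ n : ℕ, 0 < n ∧ n • (η a - a) = 0) :
    ∀ a : A, η a = a := by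
  have hfix : ∀ x, η (η x - x) = η x - x := fun x => htor _ (hquot x)
  have hδ := AddAut.nsmul_apply_sub_eq_zero_of_nsmul_eq_zero hfix hord
  intro a
  have := ((η : A →+ A) - AddMonoidHom.id A).apply_eq_zero_of_nsmul_apply_eq_zero
    (fun x => hdiv x p hp.pos) hδ a
  exact sub_eq_zero.mp this
end
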